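/- arXiv:2103.09598 — 4 statements merged into one kernel-verified Lean document; each statement's English description precedes it below -/
import Mathlib

section
/- Let T = [I − P(RAP)^{-1}RA]G be the two-level iteration matrix with R = Pᵀ, where the columns of P span V_c = span{p_1,...,p_m}, rank P = m, and RAP is invertible. If V_c ⊆ span{v_1,...,v_m̃} and V_c ∩ span{v_{m̃+1},...,v_n} = {0}, where (λ_j, v_j) are eigenpairs of G that are also eigenvectors of A (A v_j = λ̃_j v_j), then span{v_1,...,v_m̃} is invariant under T, and for j > m̃, T v_j ∈ λ_j v_j + span{v_1,...,v_m̃}. -/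
open Matrix

theorem stmt2 {n m mt : ℕ} (A G : Matrix (Fin n) (Fin n) ℝ)
    (P : Matrix (Fin n) (Fin m) ℝ)
    (hrank : LinearIndependent ℝ (fun k : Fin m => fun i => P i k))
    (hinv : IsUnit (Pᵀ * A * P))
    (v : Fin n → Fin n → ℝ) (hv : LinearIndependent ℝ v)
    (lam lamt : Fin n → ℝ)
    (hG : ∀ j, G.mulVec (v j) = lam j • v j)
    (hA : ∀ j, A.mulVec (v j) = lamt j • v j)
    (S : Submodule ℝ (Fin n → ℝ))
    (hS : S = Submodule.span ℝ {x | ∃ j : Fin n, (j : ℕ) < mt ∧ x = v j})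
    (S' : Submodule ℝ (Fin n → ℝ))
    (hS' : S' = Submodule.span ℝ {x | ∃ j : Fin n, mt ≤ (j : ℕ) ∧ x = v j})
    (Vc : Submodule ℝ (Fin n → ℝ))
    (hVc : Vc = Submodule.span ℝ (Set.range fun k : Fin m => fun i => P i k))
    (h1 : Vc ≤ S) (h2 : Vc ⊓ S' = ⊥)
    (T : Matrix (Fin n) (Fin n) ℝ)
    (hT : T = (1 - P * (Pᵀ * A * P)⁻¹ * Pᵀ * A) * G) :
    (∀ j : Fin n, (j : ℕ) < mt → T.mulVec (v j) ∈ S) ∧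
    (∀ j : Fin n, mt ≤ (j : ℕ) → ∃ w ∈ S, T.mulVec (v j) = lam j • v j + w) := by
  have hcol : ∀ y : Fin m → ℝ, P.mulVec y ∈ S := by
    intro y
    apply h1
    rw [hVc]
    have : P.mulVec y ∈ LinearMap.range P.mulVecLin := ⟨y, rfl⟩
    rwa [Matrix.range_mulVecLin] at this
  have hvj : ∀ j : Fin n, (j : ℕ) < mt → v j ∈ S := by
    intro j hj
    rw [hS]
    exact Submodule.subset_span ⟨j, hj, rfl⟩
  have key : ∀ j, T.mulVec (v j) = lam j • v j -
      P.mulVec (((Pᵀ * A * P)⁻¹ * Pᵀ * A).mulVec (lam j • v j)) := by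
    intro j
    rw [hT, ← Matrix.mulVec_mulVec, hG, Matrix.sub_mulVec, Matrix.one_mulVec,
      show P * (Pᵀ * A * P)⁻¹ * Pᵀ * A = P * ((Pᵀ * A * P)⁻¹ * Pᵀ * A) from by
        simp only [Matrix.mul_assoc],
      ← Matrix.mulVec_mulVec]
  constructor
  · intro j hj
    rw [key j]
    exact S.sub_mem (S.smul_mem _ (hvj j hj)) (hcol _)
  · intro j hj
    refine ⟨-P.mulVec (((Pᵀ * A * P)⁻¹ * Pᵀ * A).mulVec (lam j • v j)),
      S.neg_mem (hcol _), ?_⟩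
    rw [key j, sub_eq_add_neg]
end

section
/- Let γ > 0, λ̃_1 λ̃_2 > 0, and λ_1 > λ_2 > 0. Then the derivative of ε ↦ λ(ε,γ) at ε = 0 is strictly positive, and consequently there exists ε̃ < 0 with |λ(ε̃,γ)| < |λ_2| = |λ(0,γ)|. -/
/-!
The quotient rule gives `λ'(0) = γ (λ₁ - λ₂) λ̃₁ λ̃₂ / λ̃₁² > 0`. Since `λ(0) = λ₂ > 0`, for `ε < 0`
close to `0` the value `λ(ε)` stays positive by continuity and drops below `λ₂` because the
difference quotient at `0` is positive.
-/

open Filter Topology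

theorem hasDerivAt_quadratic {𝕜 : Type*} [NontriviallyNormedField 𝕜] (a b c x : 𝕜) :
    HasDerivAt (fun x => a * x ^ 2 + b * x + c) (2 * a * x + b) x := by
  refine ((((hasDerivAt_pow 2 x).const_mul a).fun_add ((hasDerivAt_id x).const_mul b)).add_const
    c).congr_deriv ?_
  push_cast
  ring

theorem hasDerivAt_quadratic_div_quadratic_zero {𝕜 : Type*} [NontriviallyNormedField 𝕜]
    (a b c d e f : 𝕜) (hf : f ≠ 0) :
    HasDerivAt (fun x => (a * x ^ 2 + b * x + c) / (d * x ^ 2 + e * x + f))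
      ((b * f - c * e) / f ^ 2) 0 := by
  refine ((hasDerivAt_quadratic a b c 0).fun_div (hasDerivAt_quadratic d e f 0)
    (by simpa using hf)).congr_deriv ?_
  simp

theorem HasDerivAt.eventually_lt_left {f : ℝ → ℝ} {f' x : ℝ} (hf : HasDerivAt f f' x)
    (hf' : 0 < f') : ∀ᶠ y in 𝓝[<] x, f y < f x := by
  have hslope := (hasDerivAt_iff_tendsto_slope.mp hf).eventually (eventually_gt_nhds hf')
  filter_upwards [nhdsLT_le_nhdsNE x hslope, self_mem_nhdsWithin] with y hy (hyx : y < x)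
  exact (slope_pos_iff_gt hyx).mp hy

theorem HasDerivAt.exists_lt_left_abs_lt {f : ℝ → ℝ} {f' x : ℝ} (hf : HasDerivAt f f' x)
    (hf' : 0 < f') (hfx : 0 < f x) : ∃ y < x, |f y| < |f x| := by
  have hpos : ∀ᶠ y in 𝓝[<] x, 0 < f y :=
    nhdsWithin_le_nhds (hf.continuousAt.eventually (eventually_gt_nhds hfx))
  obtain ⟨y, hlt, hypos, hyx⟩ :=
    ((hf.eventually_lt_left hf').and (hpos.and self_mem_nhdsWithin)).exists
  exact ⟨y, hyx, by rwa [abs_of_pos hypos, abs_of_pos hfx]⟩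

theorem stmt10 (l1 l2 t1 t2 γ : ℝ) (ht : t1 * t2 > 0) (hγ : γ > 0)
    (h1 : l1 > l2) (h2 : l2 > 0)
    (lam : ℝ → ℝ)
    (hlam : ∀ ε, lam ε =
      (l1 * t2 * ε ^ 2 + γ * (l1 * t2 + l2 * t1) * ε + l2 * t1)
        / (t2 * ε ^ 2 + γ * (t1 + t2) * ε + t1)) :
    0 < deriv lam 0 ∧ ∃ e : ℝ, e < 0 ∧ |lam e| < |l2| := by
  have ht1 : t1 ≠ 0 := left_ne_zero_of_mul ht.ne'
  have hderiv : HasDerivAt lam (γ * (l1 - l2) * (t1 * t2) / t1 ^ 2) 0 := by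
    rw [funext hlam]
    refine (hasDerivAt_quadratic_div_quadratic_zero _ _ _ _ _ _ ht1).congr_deriv ?_
    field_simp
    ring
  have hderiv_pos : 0 < γ * (l1 - l2) * (t1 * t2) / t1 ^ 2 :=
    div_pos (mul_pos (mul_pos hγ (sub_pos.mpr h1)) ht) (by positivity)
  have hlam0 : lam 0 = l2 := by simp [hlam, ht1]
  refine ⟨hderiv.deriv ▸ hderiv_pos, ?_⟩
  simpa [hlam0] using hderiv.exists_lt_left_abs_lt hderiv_pos (hlam0 ▸ h2)
end

section
/- If M ∈ ℝ^{n×n} is symmetric and invertible, then M̄A = 2 M^{-1}A − (M^{-1}A)², where M̄ := M^{-1} + M^{-⊤} − M^{-⊤} A M^{-1} and A is symmetric. Moreover, writing G = I − M^{-1}A, one has M̄A = I − G², so v is an eigenvector of M̄A with eigenvalue μ if and only if v is an eigenvector of G² with eigenvalue 1 − μ. -/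
open Matrix

theorem stmt13 {n : ℕ} (A M : Matrix (Fin n) (Fin n) ℝ)
    (hA : A.IsSymm) (hM : M.IsSymm) (hMinv : IsUnit M)
    (Mb G : Matrix (Fin n) (Fin n) ℝ)
    (hMb : Mb = M⁻¹ + (M⁻¹)ᵀ - (M⁻¹)ᵀ * A * M⁻¹)
    (hG : G = 1 - M⁻¹ * A) :
    Mb * A = (2 : ℝ) • (M⁻¹ * A) - (M⁻¹ * A) ^ 2 ∧
    Mb * A = 1 - G ^ 2 ∧
    ∀ (v : Fin n → ℝ) (μ : ℝ), v ≠ 0 →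
      ((Mb * A).mulVec v = μ • v ↔ (G ^ 2).mulVec v = (1 - μ) • v) := by
  have hMt : (M⁻¹)ᵀ = M⁻¹ := by
    rw [Matrix.transpose_nonsing_inv, hM.eq]
  have h1 : Mb * A = (2 : ℝ) • (M⁻¹ * A) - (M⁻¹ * A) ^ 2 := by
    rw [hMb, hMt]
    simp only [sub_mul, add_mul, pow_two, two_smul]
    noncomm_ring
  have h2 : Mb * A = 1 - G ^ 2 := by
    rw [h1, hG]
    simp only [pow_two, two_smul]
    noncomm_ring
  refine ⟨h1, h2, fun v μ hv => ?_⟩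
  rw [h2]
  constructor
  · intro h
    have := congrArg (fun w => v - w) h
    simpa [Matrix.sub_mulVec, Matrix.one_mulVec, sub_smul, sub_sub_cancel] using this
  · intro h
    rw [Matrix.sub_mulVec, Matrix.one_mulVec, h, sub_smul, one_smul, sub_sub_cancel]
end

section
/- Under the hypotheses of the perturbation theorem with m = 1 — eigenpairs (v_1,λ_1), (v_2,λ_2), (v_3,λ_3) of G, 0 < |λ_3| < |λ_2| ≤ |λ_1|, v_j also eigenvectors of A with λ̃_1 λ̃_2 > 0, γ = v_1ᵀv_2, and opposite signs λ_1 > 0 > λ_2 or λ_2 > 0 > λ_1 — there exists ε̃ ≠ 0 such that the spectral radius of the coefficient matrix T̃(ε̃) equals |λ_3|, which is strictly smaller than ρ(T̃(0)) = |λ_2|; i.e., max{|λ(ε̃,γ)|, |λ_3|} = |λ_3| < |λ_2|. -/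
/-!
Since `λ̃₁ λ̃₂ > 0` and `λ₁ λ₂ < 0`, the numerator of `λ(·, γ)` is a quadratic whose leading and
constant coefficients `λ₁ λ̃₂` and `λ₂ λ̃₁` have opposite signs. Its discriminant is therefore
positive and its roots are nonzero, so some `ε̃ ≠ 0` gives `λ(ε̃, γ) = 0`, while `λ(0, γ) = λ₂`.
-/

theorem exists_ne_zero_quadratic_eq_zero {a b c : ℝ} (hac : a * c < 0) :
    ∃ x ≠ 0, a * x ^ 2 + b * x + c = 0 := by
  have ha : a ≠ 0 := by rintro rfl; simp at hac
  have hc : c ≠ 0 := by rintro rfl; simp at hac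
  have hdiscrim : 0 ≤ discrim a b c := by rw [discrim]; nlinarith [sq_nonneg b]
  obtain ⟨x, hx⟩ := exists_quadratic_eq_zero ha ⟨√(discrim a b c), (Real.mul_self_sqrt hdiscrim).symm⟩
  refine ⟨x, ?_, by rw [sq]; exact hx⟩
  rintro rfl
  exact hc (by simpa using hx)

theorem stmt17_general (l1 l2 l3 t1 t2 γ : ℝ)
    (h32 : |l3| < |l2|)
    (ht : t1 * t2 > 0) (hsign : l1 * l2 < 0)
    (lam : ℝ → ℝ)
    (hlam : ∀ ε, lam ε =
      (l1 * t2 * ε ^ 2 + γ * (l1 * t2 + l2 * t1) * ε + l2 * t1)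
        / (t2 * ε ^ 2 + γ * (t1 + t2) * ε + t1)) :
    (∃ e : ℝ, e ≠ 0 ∧ max |lam e| |l3| = |l3|) ∧
    |l3| < |l2| ∧ max |lam 0| |l3| = |l2| := by
  have ht1 : t1 ≠ 0 := by rintro rfl; simp at ht
  have hcoeff : l1 * t2 * (l2 * t1) < 0 := by
    rw [show l1 * t2 * (l2 * t1) = l1 * l2 * (t1 * t2) by ring]
    exact mul_neg_of_neg_of_pos hsign ht
  obtain ⟨e, he, hroot⟩ :=
    exists_ne_zero_quadratic_eq_zero (b := γ * (l1 * t2 + l2 * t1)) hcoeff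
  have hlam_e : lam e = 0 := by rw [hlam, hroot, zero_div]
  have hlam_zero : lam 0 = l2 := by simp [hlam, ht1]
  refine ⟨⟨e, he, ?_⟩, h32, ?_⟩
  · simp [hlam_e]
  · rw [hlam_zero]
    exact max_eq_left h32.le

theorem stmt17 (l1 l2 l3 t1 t2 γ : ℝ)
    (h3 : 0 < |l3|) (h32 : |l3| < |l2|) (h21 : |l2| ≤ |l1|)
    (ht : t1 * t2 > 0) (hsign : l1 * l2 < 0)
    (hden : ∀ ε : ℝ, t2 * ε ^ 2 + γ * (t1 + t2) * ε + t1 ≠ 0)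
    (lam : ℝ → ℝ)
    (hlam : ∀ ε, lam ε =
      (l1 * t2 * ε ^ 2 + γ * (l1 * t2 + l2 * t1) * ε + l2 * t1)
        / (t2 * ε ^ 2 + γ * (t1 + t2) * ε + t1)) :
    (∃ e : ℝ, e ≠ 0 ∧ max |lam e| |l3| = |l3|) ∧
    |l3| < |l2| ∧ max |lam 0| |l3| = |l2| :=
  stmt17_general l1 l2 l3 t1 t2 γ h32 ht hsign lam hlam
end
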